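/- Fix α ∈ ℝ with α/π irrational, ℓ > 1, c > 0, τ ∈ [1, ℓ], and β, γ ∈ ℝ. For n = 1,…,N write c τ ℓ^{N−n} cos(β + γ − nα) = k_n + ε_n with k_n ∈ ℤ and ε_n ∈ [−1/2, 1/2). If max{|ε_n|, |ε_{n+1}|, |ε_{n+2}|} ≤ 1/(15ℓ²), then |(−1)ℓ² k_{n+2} + (2 cos α) ℓ k_{n+1} − k_n| < 1/2; in particular k_{n+2} and k_{n+1} uniquely determine k_n. Moreover, without the smallness assumption, |(−1)ℓ²ε_{n+2} + (2cos α)ℓε_{n+1} − ε_n| ≤ ℓ² + ℓ + 1, so for fixed k_{n+2}, k_{n+1} there are at most 7ℓ² possible values of k_n. -/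

import Mathlib

open Real

/-!
The angles `θ_n = β + γ - nα` form an arithmetic progression, so `cos θ_{n+2} = 2 cos α cos θ_{n+1} - cos θ_n`;
after the scaling by `ℓ^{N-n}` the exact values `u_n = k_n + ε_n` satisfy
`-ℓ² u_{n+2} + (2 cos α) ℓ u_{n+1} - u_n = 0`. Hence the same combination of the `k_n` equals minus that
of the `ε_n`, which the triangle inequality bounds by `ℓ²|ε_{n+2}| + 2ℓ|ε_{n+1}| + |ε_n|`.
-/

theorem cos_sub_eq_two_mul_cos_mul_cos_sub_cos_add (x α : ℝ) :
    cos (x - α) = 2 * cos α * cos x - cos (x + α) := by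
  rw [cos_sub, cos_add]
  ring

section Recurrence

variable {ℓ a x y z : ℝ}

theorem abs_recurrence_le (hℓ : 0 ≤ ℓ) (ha : |a| ≤ 1) :
    |(-1) * ℓ ^ 2 * z + 2 * a * ℓ * y - x| ≤ ℓ ^ 2 * |z| + 2 * ℓ * |y| + |x| := by
  have hay : |2 * a * ℓ * y| ≤ 2 * ℓ * |y| := by
    rw [abs_mul, abs_mul, abs_mul, abs_two, abs_of_nonneg hℓ]
    nlinarith [mul_le_mul_of_nonneg_right ha (mul_nonneg hℓ (abs_nonneg y))]
  have hz : |(-1) * ℓ ^ 2 * z| = ℓ ^ 2 * |z| := by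
    rw [abs_mul, abs_mul, abs_neg, abs_one, one_mul, abs_of_nonneg (sq_nonneg ℓ)]
  calc |(-1) * ℓ ^ 2 * z + 2 * a * ℓ * y - x|
      ≤ |(-1) * ℓ ^ 2 * z| + |2 * a * ℓ * y| + |-x| := abs_add_three _ _ (-x)
    _ ≤ ℓ ^ 2 * |z| + 2 * ℓ * |y| + |x| := by
        rw [hz, abs_neg]
        linarith

theorem abs_recurrence_lt_half_of_small (hℓ : 1 ≤ ℓ) (ha : |a| ≤ 1)
    (hx : |x| ≤ 1 / (15 * ℓ ^ 2)) (hy : |y| ≤ 1 / (15 * ℓ ^ 2)) (hz : |z| ≤ 1 / (15 * ℓ ^ 2)) :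
    |(-1) * ℓ ^ 2 * z + 2 * a * ℓ * y - x| < 1 / 2 := by
  have hℓ0 : 0 < ℓ := by linarith
  have hz' : ℓ ^ 2 * |z| ≤ 1 / 15 := by
    rw [le_div_iff₀ (by positivity)] at hz
    linarith
  have hy' : 2 * ℓ * |y| ≤ 2 / 15 := by
    rw [le_div_iff₀ (by positivity)] at hy
    nlinarith [abs_nonneg y]
  have hx' : |x| ≤ 1 / 15 := by
    rw [le_div_iff₀ (by positivity)] at hx
    nlinarith [abs_nonneg x, one_le_pow₀ (n := 2) hℓ]
  linarith [abs_recurrence_le hℓ0.le ha (x := x) (y := y) (z := z)]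

theorem abs_recurrence_le_of_abs_le_half (hℓ : 0 ≤ ℓ) (ha : |a| ≤ 1)
    (hx : |x| ≤ 1 / 2) (hy : |y| ≤ 1 / 2) (hz : |z| ≤ 1 / 2) :
    |(-1) * ℓ ^ 2 * z + 2 * a * ℓ * y - x| ≤ ℓ ^ 2 + ℓ + 1 := by
  have := abs_recurrence_le hℓ ha (x := x) (y := y) (z := z)
  nlinarith [sq_nonneg ℓ]

end Recurrence

theorem recurrence_eq_zero_of_eq_mul_pow_mul_cos {u : ℕ → ℝ} {A ℓ θ α : ℝ} {N n : ℕ}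
    (hn : n + 2 ≤ N) (hu : ∀ m, n ≤ m → m ≤ n + 2 → u m = A * ℓ ^ (N - m) * cos (θ - m * α)) :
    (-1) * ℓ ^ 2 * u (n + 2) + 2 * cos α * ℓ * u (n + 1) - u n = 0 := by
  obtain ⟨p, rfl⟩ : ∃ p, N = n + 2 + p := ⟨N - (n + 2), by omega⟩
  rw [hu n le_rfl (by omega), hu (n + 1) (by omega) (by omega), hu (n + 2) (by omega) le_rfl,
    show n + 2 + p - n = p + 2 by omega, show n + 2 + p - (n + 1) = p + 1 by omega,
    show n + 2 + p - (n + 2) = p by omega]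
  have hcos := cos_sub_eq_two_mul_cos_mul_cos_sub_cos_add (θ - (n + 1 : ℕ) * α) α
  push_cast at hcos ⊢
  rw [show θ - (n + 2) * α = θ - (n + 1) * α - α by ring, hcos,
    show θ - (n + 1) * α + α = θ - n * α by ring]
  ring

theorem ncard_setOf_abs_sub_intCast_le_le (A : ℝ) {B : ℝ} (hB : 0 ≤ B) :
    ({j : ℤ | |A - j| ≤ B}.ncard : ℝ) ≤ 2 * B + 1 := by
  have hset : {j : ℤ | |A - j| ≤ B} = ↑(Finset.Icc ⌈A - B⌉ ⌊A + B⌋) := by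
    ext j
    simp only [Set.mem_ofPred_eq, abs_le, Finset.coe_Icc, Set.mem_Icc, Int.ceil_le, Int.le_floor]
    constructor <;> rintro ⟨h₁, h₂⟩ <;> constructor <;> linarith
  rw [hset, Set.ncard_coe_finset, Int.card_Icc]
  have hcast : (((⌊A + B⌋ + 1 - ⌈A - B⌉).toNat : ℕ) : ℝ) = max ((⌊A + B⌋ + 1 - ⌈A - B⌉ : ℤ) : ℝ) 0 := by
    exact_mod_cast Int.toNat_eq_max _
  rw [hcast, max_le_iff]
  push_cast
  constructor
  · linarith [Int.floor_le (A + B), Int.le_ceil (A - B)]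
  · linarith

theorem three_term_recurrence_general
    (α ℓ c τ β γ : ℝ)
    (hℓ : 1 < ℓ)
    (N : ℕ) (k : ℕ → ℤ) (e : ℕ → ℝ)
    (hdecomp : ∀ n, 1 ≤ n → n ≤ N →
      c * τ * ℓ ^ (N - n) * Real.cos (β + γ - n * α) = (k n : ℝ) + e n ∧
      -(1/2) ≤ e n ∧ e n < 1/2) :
    (∀ n, 1 ≤ n → n + 2 ≤ N →
      (max (|e n|) (max (|e (n+1)|) (|e (n+2)|)) ≤ 1 / (15 * ℓ ^ 2) →
        |(-1) * ℓ ^ 2 * (k (n+2) : ℝ) + 2 * Real.cos α * ℓ * (k (n+1) : ℝ) - (k n : ℝ)|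
          < 1/2) ∧
      |(-1) * ℓ ^ 2 * e (n+2) + 2 * Real.cos α * ℓ * e (n+1) - e n| ≤ ℓ ^ 2 + ℓ + 1) ∧
    (∀ K2 K1 : ℤ,
      (Set.ncard {j : ℤ |
        |(-1) * ℓ ^ 2 * (K2 : ℝ) + 2 * Real.cos α * ℓ * (K1 : ℝ) - (j : ℝ)|
          ≤ ℓ ^ 2 + ℓ + 1} : ℝ) ≤ 7 * ℓ ^ 2) := by
  have hcos := abs_cos_le_one α
  refine ⟨fun n hn hnN => ?_, fun K2 K1 => ?_⟩
  · have hzero := recurrence_eq_zero_of_eq_mul_pow_mul_cos (u := fun m => k m + e m) hnN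
      fun m hm hm' => (hdecomp m (by omega) (by omega)).1.symm
    have hk : (-1) * ℓ ^ 2 * (k (n+2) : ℝ) + 2 * cos α * ℓ * (k (n+1) : ℝ) - (k n : ℝ)
        = -((-1) * ℓ ^ 2 * e (n+2) + 2 * cos α * ℓ * e (n+1) - e n) := by
      linear_combination hzero
    have hhalf : ∀ m, 1 ≤ m → m ≤ N → |e m| ≤ 1 / 2 := fun m hm hmN =>
      abs_le.2 ⟨(hdecomp m hm hmN).2.1, (hdecomp m hm hmN).2.2.le⟩
    refine ⟨fun hsmall => ?_, abs_recurrence_le_of_abs_le_half (by linarith) hcos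
      (hhalf n hn (by omega)) (hhalf _ (by omega) (by omega)) (hhalf _ (by omega) hnN)⟩
    simp only [max_le_iff] at hsmall
    rw [hk, abs_neg]
    exact abs_recurrence_lt_half_of_small hℓ.le hcos hsmall.1 hsmall.2.1 hsmall.2.2
  · refine (ncard_setOf_abs_sub_intCast_le_le _ (by positivity)).trans ?_
    nlinarith

/-- The three-term recurrence argument inside Lemma 4.3 of the paper. Write
`c τ ℓ^{N-n} cos(β+γ-nα) = k_n + ε_n` with `k_n ∈ ℤ` and `ε_n ∈ [-1/2,1/2)`. If
`max(|ε_n|,|ε_{n+1}|,|ε_{n+2}|) ≤ 1/(15ℓ²)` then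
`|(-1)ℓ² k_{n+2} + (2cos α)ℓ k_{n+1} - k_n| < 1/2` (so `k_{n+2}, k_{n+1}` determine
`k_n`); unconditionally `|(-1)ℓ²ε_{n+2} + (2cos α)ℓε_{n+1} - ε_n| ≤ ℓ² + ℓ + 1`, so for
fixed `k_{n+2}, k_{n+1}` there are at most `7ℓ²` possible values of `k_n`. -/
theorem three_term_recurrence
    (α ℓ c τ β γ : ℝ)
    (hα : Irrational (α / Real.pi)) (hℓ : 1 < ℓ) (hc : 0 < c)
    (hτ : τ ∈ Set.Icc 1 ℓ)
    (N : ℕ) (k : ℕ → ℤ) (e : ℕ → ℝ)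
    (hdecomp : ∀ n, 1 ≤ n → n ≤ N →
      c * τ * ℓ ^ (N - n) * Real.cos (β + γ - n * α) = (k n : ℝ) + e n ∧
      -(1/2) ≤ e n ∧ e n < 1/2) :
    (∀ n, 1 ≤ n → n + 2 ≤ N →
      (max (|e n|) (max (|e (n+1)|) (|e (n+2)|)) ≤ 1 / (15 * ℓ ^ 2) →
        |(-1) * ℓ ^ 2 * (k (n+2) : ℝ) + 2 * Real.cos α * ℓ * (k (n+1) : ℝ) - (k n : ℝ)|
          < 1/2) ∧
      |(-1) * ℓ ^ 2 * e (n+2) + 2 * Real.cos α * ℓ * e (n+1) - e n| ≤ ℓ ^ 2 + ℓ + 1) ∧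
    (∀ K2 K1 : ℤ,
      (Set.ncard {j : ℤ |
        |(-1) * ℓ ^ 2 * (K2 : ℝ) + 2 * Real.cos α * ℓ * (K1 : ℝ) - (j : ℝ)|
          ≤ ℓ ^ 2 + ℓ + 1} : ℝ) ≤ 7 * ℓ ^ 2) :=
  three_term_recurrence_general α ℓ c τ β γ hℓ N k e hdecomp
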